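/- arXiv:2012.12772 — 3 statements merged into one kernel-verified Lean document; each statement's English description precedes it below -/
import Mathlib

section
/- A symmetric matrix D is a Euclidean distance matrix (i.e., there exist points p_1,...,p_n in some Euclidean space with D_{ij} = ||p_i - p_j||^2) if and only if D has zero diagonal and -JDJ is positive semidefinite, where J = I - (1/n)𝟙𝟙^T is the centering matrix. -/
/-!
Write `G` for the Gram matrix of points `pᵢ`. Expanding `‖pᵢ - pⱼ‖² = Gᵢᵢ + Gⱼⱼ - 2 Gᵢⱼ` exhibits
the squared-distance matrix as `d 𝟙ᵀ + 𝟙 dᵀ - 2G` with `dᵢ = ‖pᵢ‖²`; since `J 𝟙 = 0`, centering kills the rank-one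
terms and `-JDJ = 2 JGJ ⪰ 0`. Conversely, `J` fixes the zero-sum vector `eᵢ - eⱼ`, so the quadratic
form of `JDJ` at `eᵢ - eⱼ` is that of `D`, namely `-2 Dᵢⱼ` when `D` is symmetric and hollow.
Factoring the positive semidefinite matrix `-½ JDJ` as a Gram matrix of points `pᵢ` therefore gives
`‖pᵢ - pⱼ‖² = Dᵢⱼ`.
-/

open Matrix

/-- The centering matrix `J = I - (1/n) 𝟙𝟙ᵀ`. -/
noncomputable def centerJ (n : ℕ) : Matrix (Fin n) (Fin n) ℝ :=
  1 - ((n : ℝ))⁻¹ • Matrix.of (fun _ _ => (1 : ℝ))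

namespace Matrix

variable {ι : Type*}

section Gram

variable {E : Type*} [NormedAddCommGroup E] [InnerProductSpace ℝ E]

lemma norm_sub_sq_eq_gram (v : ι → E) (i j : ι) :
    ‖v i - v j‖ ^ 2 = gram ℝ v i i + gram ℝ v j j - gram ℝ v i j - gram ℝ v j i := by
  simp only [gram_apply, norm_sub_sq_real, real_inner_self_eq_norm_sq, real_inner_comm (v i)]
  ring

lemma of_norm_sub_sq_eq_gram (v : ι → E) :
    (of fun i j => ‖v i - v j‖ ^ 2)
      = vecMulVec (fun i => ‖v i‖ ^ 2) 1 + vecMulVec 1 (fun i => ‖v i‖ ^ 2)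
        - (2 : ℝ) • gram ℝ v := by
  ext i j
  simp only [of_apply, norm_sub_sq_real, add_apply, sub_apply, smul_apply, vecMulVec_apply,
    gram_apply, Pi.one_apply, smul_eq_mul]
  ring

end Gram

variable [Fintype ι]

lemma single_sub_single_dotProduct_mulVec {α : Type*} [CommRing α] [DecidableEq ι]
    (A : Matrix ι ι α) (i j : ι) :
    (Pi.single i 1 - Pi.single j 1) ⬝ᵥ A *ᵥ (Pi.single i 1 - Pi.single j 1)
      = A i i + A j j - A i j - A j i := by
  simp only [mulVec_sub, sub_dotProduct, dotProduct_sub, mulVec_single_one, single_one_dotProduct,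
    col_apply]
  ring

open scoped ComplexOrder MatrixOrder in
theorem PosSemidef.exists_eq_gram {𝕜 : Type*} [RCLike 𝕜] {A : Matrix ι ι 𝕜}
    (hA : A.PosSemidef) : ∃ v : ι → EuclideanSpace 𝕜 ι, A = gram 𝕜 v := by
  classical
  obtain ⟨B, rfl⟩ := CStarAlgebra.nonneg_iff_eq_star_mul_self.mp hA.nonneg
  refine ⟨fun i => WithLp.toLp 2 (B.col i), ?_⟩
  ext i j
  simp [gram_apply, mul_apply, PiLp.inner_apply, mul_comm]

end Matrix

section Centering

variable {n : ℕ} {E : Type*} [NormedAddCommGroup E] [InnerProductSpace ℝ E]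

lemma centerJ_transpose : (centerJ n)ᵀ = centerJ n := by
  ext i j
  simp [centerJ, one_apply, eq_comm]

lemma centerJ_mulVec (v : Fin n → ℝ) :
    centerJ n *ᵥ v = v - fun _ => (n : ℝ)⁻¹ * ∑ i, v i := by
  rw [centerJ, sub_mulVec, one_mulVec, smul_mulVec]
  ext i
  simp [mulVec, dotProduct]

lemma centerJ_mulVec_of_sum_eq_zero {v : Fin n → ℝ} (hv : ∑ i, v i = 0) :
    centerJ n *ᵥ v = v := by
  simp [centerJ_mulVec, hv, Pi.zero_def]

lemma centerJ_mulVec_one : centerJ n *ᵥ 1 = 0 := by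
  ext i
  have : (n : ℝ) ≠ 0 := Nat.cast_ne_zero.mpr (Fin.pos i).ne'
  simp [centerJ_mulVec, this]

lemma dotProduct_centerJ_mul_mul_centerJ_mulVec (A : Matrix (Fin n) (Fin n) ℝ)
    {v : Fin n → ℝ} (hv : ∑ i, v i = 0) :
    v ⬝ᵥ (centerJ n * A * centerJ n) *ᵥ v = v ⬝ᵥ A *ᵥ v := by
  rw [← mulVec_mulVec, ← mulVec_mulVec, dotProduct_mulVec, ← mulVec_transpose, centerJ_transpose,
    centerJ_mulVec_of_sum_eq_zero hv]

lemma centerJ_mul_vecMulVec_mul_centerJ (u w : Fin n → ℝ) :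
    centerJ n * vecMulVec u w * centerJ n = vecMulVec (centerJ n *ᵥ u) (centerJ n *ᵥ w) := by
  rw [mul_vecMulVec, vecMulVec_mul, ← mulVec_transpose, centerJ_transpose]

lemma neg_centerJ_mul_of_norm_sub_sq_mul_centerJ (p : Fin n → E) :
    -(centerJ n * (of fun i j => ‖p i - p j‖ ^ 2) * centerJ n)
      = (2 : ℝ) • (centerJ n * gram ℝ p * centerJ n) := by
  rw [of_norm_sub_sq_eq_gram, mul_sub, mul_add, sub_mul, add_mul,
    centerJ_mul_vecMulVec_mul_centerJ, centerJ_mul_vecMulVec_mul_centerJ, centerJ_mulVec_one]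
  simp

lemma posSemidef_neg_centerJ_mul_of_norm_sub_sq_mul_centerJ (p : Fin n → E) :
    (-(centerJ n * (of fun i j => ‖p i - p j‖ ^ 2) * centerJ n)).PosSemidef := by
  rw [neg_centerJ_mul_of_norm_sub_sq_mul_centerJ]
  have hJ := (posSemidef_gram ℝ p).mul_mul_conjTranspose_same (centerJ n)
  rw [conjTranspose_eq_transpose_of_trivial, centerJ_transpose] at hJ
  exact hJ.smul zero_le_two

lemma exists_norm_sub_sq_eq_of_posSemidef {D : Matrix (Fin n) (Fin n) ℝ} (hD : D.IsSymm)
    (hdiag : ∀ i, D i i = 0) (hpsd : (-(centerJ n * D * centerJ n)).PosSemidef) :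
    ∃ p : Fin n → EuclideanSpace ℝ (Fin n), ∀ i j, D i j = ‖p i - p j‖ ^ 2 := by
  classical
  obtain ⟨p, hp⟩ := (hpsd.smul (by norm_num : (0 : ℝ) ≤ 2⁻¹)).exists_eq_gram
  refine ⟨p, fun i j => ?_⟩
  have hsum : ∑ l, (Pi.single i 1 - Pi.single j 1 : Fin n → ℝ) l = 0 := by
    simp [Finset.sum_sub_distrib]
  rw [norm_sub_sq_eq_gram, ← hp, ← single_sub_single_dotProduct_mulVec, smul_mulVec, neg_mulVec,
    dotProduct_smul, dotProduct_neg, dotProduct_centerJ_mul_mul_centerJ_mulVec D hsum,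
    single_sub_single_dotProduct_mulVec, hdiag, hdiag, hD.apply i j, smul_eq_mul]
  ring

end Centering

theorem edm_characterization_general (n : ℕ)
    (D : Matrix (Fin n) (Fin n) ℝ) (hD : D.IsSymm) :
    (∃ (k : ℕ) (p : Fin n → EuclideanSpace ℝ (Fin k)),
        ∀ i j, D i j = ‖p i - p j‖ ^ 2) ↔
      ((∀ i, D i i = 0) ∧ (-(centerJ n * D * centerJ n)).PosSemidef) := by
  constructor
  · rintro ⟨k, p, hp⟩
    obtain rfl : D = of fun i j => ‖p i - p j‖ ^ 2 := Matrix.ext fun i j => by rw [hp, of_apply]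
    exact ⟨fun i => by simp, posSemidef_neg_centerJ_mul_of_norm_sub_sq_mul_centerJ p⟩
  · rintro ⟨hdiag, hpsd⟩
    exact ⟨n, exists_norm_sub_sq_eq_of_posSemidef hD hdiag hpsd⟩

/-- A symmetric matrix is a Euclidean distance matrix iff it has zero diagonal
and `-JDJ` is positive semidefinite. -/
theorem edm_characterization (n : ℕ) (hn : 1 ≤ n)
    (D : Matrix (Fin n) (Fin n) ℝ) (hD : D.IsSymm) :
    (∃ (k : ℕ) (p : Fin n → EuclideanSpace ℝ (Fin k)),
        ∀ i j, D i j = ‖p i - p j‖ ^ 2) ↔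
      ((∀ i, D i i = 0) ∧ (-(centerJ n * D * centerJ n)).PosSemidef) :=
  edm_characterization_general n D hD
end

section
/- Let P̄_1 ∈ ℝ^{n×r} have orthonormal columns and define P_{T⊥}(A) := P̄_1P̄_1^T A + A P̄_1P̄_1^T - P̄_1P̄_1^T A P̄_1P̄_1^T. Then for every A ∈ S^n, the nuclear norm of P_{T⊥}(A) is at most √(2r) times the Frobenius norm of A: ||P_{T⊥}(A)||_* ≤ √(2r)||A||_F. -/
open Matrix

/-- The Frobenius norm of a real square matrix. -/
noncomputable def frobNorm {n : ℕ} (A : Matrix (Fin n) (Fin n) ℝ) : ℝ :=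
  Real.sqrt (∑ i, ∑ j, (A i j) ^ 2)

/-- The nuclear norm (sum of singular values) of a real square matrix. -/
noncomputable def nuclearNorm {n : ℕ} (A : Matrix (Fin n) (Fin n) ℝ) : ℝ :=
  ∑ i, Real.sqrt ((Matrix.isHermitian_conjTranspose_mul_self A).eigenvalues i)

/-!
With `Q = P₁P₁ᵀ` an orthogonal projection and `Q' = 1 - Q`, the matrix `A` splits as
`P_{T⊥}(A) + Q'AQ'`, and the two summands are Frobenius-orthogonal because `Q'P_{T⊥}(A)Q' = 0`;
hence `‖P_{T⊥}(A)‖_F ≤ ‖A‖_F`. Writing `P_{T⊥}(A) = QA + Q'AQ` shows that its rank is at most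
`2 rank Q = 2r`, and Cauchy–Schwarz over the nonzero singular values of any matrix `M` gives
`‖M‖_* ≤ √(rank M) ‖M‖_F`.
-/

namespace Matrix

theorem rank_add_le {m n K : Type*} [Fintype n] [Field K] (M N : Matrix m n K) :
    (M + N).rank ≤ M.rank + N.rank := by
  rw [rank, rank, rank, mulVecLin_add]
  have hrange : LinearMap.range (M.mulVecLin + N.mulVecLin) ≤
      LinearMap.range M.mulVecLin ⊔ LinearMap.range N.mulVecLin := by
    rintro x ⟨y, rfl⟩
    exact Submodule.add_mem_sup (LinearMap.mem_range_self _ y) (LinearMap.mem_range_self _ y)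
  exact (Submodule.finrank_mono hrange).trans (Submodule.finrank_add_le_finrank_add_finrank _ _)

end Matrix

section Frobenius

variable {n : ℕ}

theorem frobNorm_nonneg (A : Matrix (Fin n) (Fin n) ℝ) : 0 ≤ frobNorm A :=
  Real.sqrt_nonneg _

theorem frobNorm_eq_sqrt_trace (A : Matrix (Fin n) (Fin n) ℝ) :
    frobNorm A = √((Aᵀ * A).trace) := by
  rw [frobNorm, Finset.sum_comm]
  simp [trace, mul_apply, sq]

theorem frobNorm_eq_sqrt_sum_eigenvalues (A : Matrix (Fin n) (Fin n) ℝ) :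
    frobNorm A = √(∑ i, (isHermitian_conjTranspose_mul_self A).eigenvalues i) := by
  rw [frobNorm_eq_sqrt_trace, ← conjTranspose_eq_transpose_of_trivial,
    (isHermitian_conjTranspose_mul_self A).trace_eq_sum_eigenvalues]
  rfl

theorem frobNorm_le_frobNorm_add {M B : Matrix (Fin n) (Fin n) ℝ} (h : (Mᵀ * B).trace = 0) :
    frobNorm M ≤ frobNorm (M + B) := by
  have hsymm : (Bᵀ * M).trace = (Mᵀ * B).trace := by
    rw [← trace_transpose, transpose_mul, transpose_transpose]
  have hB : 0 ≤ (Bᵀ * B).trace := by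
    simpa [conjTranspose_eq_transpose_of_trivial] using
      (posSemidef_conjTranspose_mul_self B).trace_nonneg
  rw [frobNorm_eq_sqrt_trace, frobNorm_eq_sqrt_trace]
  gcongr
  simp only [transpose_add, add_mul, mul_add, trace_add, hsymm, h]
  linarith

theorem nuclearNorm_le_sqrt_rank_mul_frobNorm (M : Matrix (Fin n) (Fin n) ℝ) :
    nuclearNorm M ≤ √(M.rank : ℝ) * frobNorm M := by
  classical
  set ev := (isHermitian_conjTranspose_mul_self M).eigenvalues
  have hev : ∀ i, 0 ≤ ev i := (posSemidef_conjTranspose_mul_self M).eigenvalues_nonneg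
  set s := Finset.univ.filter (fun i => ev i ≠ 0)
  have hcard : (s.card : ℝ) = M.rank := by
    rw [← rank_conjTranspose_mul_self M,
      (isHermitian_conjTranspose_mul_self M).rank_eq_card_non_zero_eigs, Fintype.card_subtype]
  have hsupp : nuclearNorm M = ∑ i ∈ s, √1 * √(ev i) := by
    simp only [Real.sqrt_one, one_mul, s]
    refine (Finset.sum_filter_of_ne fun i _ hi => ?_).symm
    contrapose! hi
    exact Real.sqrt_eq_zero'.mpr hi.le
  calc nuclearNorm M = ∑ i ∈ s, √1 * √(ev i) := hsupp
    _ ≤ √(∑ i ∈ s, 1) * √(∑ i ∈ s, ev i) :=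
        Real.sum_sqrt_mul_sqrt_le s (fun _ => zero_le_one) hev
    _ ≤ √(M.rank : ℝ) * frobNorm M := by
        rw [frobNorm_eq_sqrt_sum_eigenvalues, Finset.sum_const, nsmul_one, hcard]
        refine mul_le_mul_of_nonneg_left (Real.sqrt_le_sqrt ?_) (Real.sqrt_nonneg _)
        exact Finset.sum_le_sum_of_subset_of_nonneg (Finset.filter_subset _ _) fun i _ _ => hev i

end Frobenius

section ProjTperp

variable {m R : Type*} [Fintype m]

def projTperp [Ring R] (Q A : Matrix m m R) : Matrix m m R :=
  Q * A + A * Q - Q * A * Q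

variable [DecidableEq m]

theorem projTperp_eq_mul_add_one_sub_mul [Ring R] (Q A : Matrix m m R) :
    projTperp Q A = Q * A + (1 - Q) * A * Q := by
  rw [projTperp]
  noncomm_ring

theorem projTperp_add_one_sub_mul_mul_one_sub [Ring R] (Q A : Matrix m m R) :
    projTperp Q A + (1 - Q) * A * (1 - Q) = A := by
  rw [projTperp]
  noncomm_ring

theorem one_sub_mul_projTperp_mul_one_sub [Ring R] {Q : Matrix m m R} (hQ : IsIdempotentElem Q)
    (A : Matrix m m R) : (1 - Q) * projTperp Q A * (1 - Q) = 0 := by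
  have hexpand : (1 - Q) * projTperp Q A * (1 - Q) =
      ((1 - Q) * Q) * A * (1 - Q) + (1 - Q) * (1 - Q) * A * (Q * (1 - Q)) := by
    rw [projTperp_eq_mul_add_one_sub_mul]
    noncomm_ring
  rw [hexpand, hQ.one_sub_mul_self, hQ.mul_one_sub_self]
  simp

theorem rank_projTperp_le {K : Type*} [Field K] (Q A : Matrix m m K) :
    (projTperp Q A).rank ≤ 2 * Q.rank := by
  rw [projTperp_eq_mul_add_one_sub_mul, two_mul]
  exact (rank_add_le _ _).trans (add_le_add (rank_mul_le_left _ _) (rank_mul_le_right _ _))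

theorem frobNorm_projTperp_le {n : ℕ} {Q : Matrix (Fin n) (Fin n) ℝ} (hQ : IsIdempotentElem Q)
    (hQs : Qᵀ = Q) (A : Matrix (Fin n) (Fin n) ℝ) : frobNorm (projTperp Q A) ≤ frobNorm A := by
  conv_rhs => rw [← projTperp_add_one_sub_mul_mul_one_sub Q A]
  apply frobNorm_le_frobNorm_add
  have hQ's : (1 - Q)ᵀ = 1 - Q := by rw [transpose_sub, transpose_one, hQs]
  calc ((projTperp Q A)ᵀ * ((1 - Q) * A * (1 - Q))).trace
      = ((1 - Q) * (projTperp Q A)ᵀ * (1 - Q) * A).trace := by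
        rw [← Matrix.mul_assoc, trace_mul_comm]
        simp only [Matrix.mul_assoc]
    _ = (((1 - Q) * projTperp Q A * (1 - Q))ᵀ * A).trace := by
        simp only [transpose_mul, hQ's, Matrix.mul_assoc]
    _ = 0 := by
        rw [one_sub_mul_projTperp_mul_one_sub hQ, transpose_zero, Matrix.zero_mul, trace_zero]

end ProjTperp

theorem nuclearNorm_proj_Tperp_le_general (n r : ℕ)
    (P₁ : Matrix (Fin n) (Fin r) ℝ) (hP : P₁ᵀ * P₁ = 1)
    (A : Matrix (Fin n) (Fin n) ℝ) :
    nuclearNorm (P₁ * P₁ᵀ * A + A * (P₁ * P₁ᵀ) - P₁ * P₁ᵀ * A * (P₁ * P₁ᵀ)) ≤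
      Real.sqrt (2 * r) * frobNorm A := by
  set Q := P₁ * P₁ᵀ
  have hQ : IsIdempotentElem Q := by
    rw [IsIdempotentElem, Matrix.mul_assoc, ← Matrix.mul_assoc P₁ᵀ, hP, Matrix.one_mul]
  have hQs : Qᵀ = Q := by rw [transpose_mul, transpose_transpose]
  have hrank : ((projTperp Q A).rank : ℝ) ≤ 2 * r := by
    exact_mod_cast (rank_projTperp_le Q A).trans
      (Nat.mul_le_mul_left 2 ((rank_mul_le_left P₁ P₁ᵀ).trans (rank_le_width P₁)))
  calc nuclearNorm (projTperp Q A)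
      ≤ √((projTperp Q A).rank : ℝ) * frobNorm (projTperp Q A) :=
        nuclearNorm_le_sqrt_rank_mul_frobNorm _
    _ ≤ √(2 * r) * frobNorm A :=
        mul_le_mul (Real.sqrt_le_sqrt hrank) (frobNorm_projTperp_le hQ hQs A)
          (frobNorm_nonneg _) (Real.sqrt_nonneg _)

/-- `‖P_{T⊥}(A)‖_* ≤ √(2r) ‖A‖_F` for `P_{T⊥}(A) = QA + AQ - QAQ`, `Q = P₁P₁ᵀ`. -/
theorem nuclearNorm_proj_Tperp_le (n r : ℕ) (hr : 1 ≤ r) (hrn : r ≤ n)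
    (P₁ : Matrix (Fin n) (Fin r) ℝ) (hP : P₁ᵀ * P₁ = 1)
    (A : Matrix (Fin n) (Fin n) ℝ) (hA : A.IsSymm) :
    nuclearNorm (P₁ * P₁ᵀ * A + A * (P₁ * P₁ᵀ) - P₁ * P₁ᵀ * A * (P₁ * P₁ᵀ)) ≤
      Real.sqrt (2 * r) * frobNorm A :=
  nuclearNorm_proj_Tperp_le_general n r P₁ hP A
end

section
/- The polar cone of the almost positive semidefinite cone K^n_+ = {A ∈ S^n : JAJ ⪰ 0} is (K^n_+)° = { H · [[Z,0],[0,0]] · H : Z ∈ S^{n-1}, Z ⪯ 0 }, where H is the Householder matrix with u = (1,...,1,√n+1)^T. -/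
/-!
For any `v`, the polar (inside the symmetric matrices) of the cone of symmetric matrices that are
positive semidefinite on `v⊥` consists of the `A ⪯ 0` with `A v = 0`. Necessity comes from testing
against `z zᵀ` and `± v vᵀ`; for sufficiency, `A = P A P` for the orthogonal projection `P` onto
`v⊥`, so `⟨A, Y⟩ = ⟨A, P Y P⟩ ≤ 0` because `P Y P ⪰ 0`. The Householder matrix `H` is a symmetric
involution sending `𝟙` to a nonzero multiple of the last basis vector `e`, so conjugation by `H`
turns the description for `v = 𝟙` into the one for `v = e`, where `A e = 0` says that the last row
and column of `A` vanish.
-/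

open Matrix

/-- The vector `u = (1,…,1,√(n+1)+1)ᵀ`. -/
noncomputable def uvec (n : ℕ) : Fin (n + 1) → ℝ :=
  fun i => if i = Fin.last n then Real.sqrt (n + 1) + 1 else 1

/-- The Householder matrix `H = I - (2/(uᵀu)) u uᵀ`. -/
noncomputable def householderH (n : ℕ) : Matrix (Fin (n + 1)) (Fin (n + 1)) ℝ :=
  1 - (2 / (uvec n ⬝ᵥ uvec n)) • Matrix.vecMulVec (uvec n) (uvec n)

namespace Matrix

variable {ι : Type*} [Fintype ι]

/-- For `v = 𝟙` this is the almost positive semidefinite cone `K^n_+`. -/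
def psdOnHyperplane (v : ι → ℝ) : Set (Matrix ι ι ℝ) :=
  {Y | Y.IsSymm ∧ ∀ x, v ⬝ᵥ x = 0 → 0 ≤ x ⬝ᵥ Y *ᵥ x}

/-- The polar cone `C°`, taken inside the symmetric matrices `S^n`. -/
def symmPolar (S : Set (Matrix ι ι ℝ)) : Set (Matrix ι ι ℝ) :=
  {A | A.IsSymm ∧ ∀ Y ∈ S, trace (A * Y) ≤ 0}

open scoped MatrixOrder in
theorem PosSemidef.trace_mul_nonneg {A B : Matrix ι ι ℝ} (hA : A.PosSemidef)
    (hB : B.PosSemidef) : 0 ≤ trace (A * B) := by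
  classical
  obtain ⟨C, rfl⟩ := CStarAlgebra.nonneg_iff_eq_star_mul_self.mp hA.nonneg
  rw [star_eq_conjTranspose, mul_assoc, trace_mul_comm]
  exact (hB.mul_mul_conjTranspose_same C).trace_nonneg

theorem trace_mul_vecMulVec_self (A : Matrix ι ι ℝ) (z : ι → ℝ) :
    trace (A * vecMulVec z z) = z ⬝ᵥ A *ᵥ z := by
  rw [mul_vecMulVec, trace_vecMulVec, dotProduct_comm]

theorem dotProduct_vecMulVec_mulVec (a b x : ι → ℝ) :
    x ⬝ᵥ vecMulVec a b *ᵥ x = (x ⬝ᵥ a) * (b ⬝ᵥ x) := by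
  rw [vecMulVec_mulVec, op_smul_eq_smul, dotProduct_smul, smul_eq_mul, mul_comm]

theorem vecMulVec_self_mem_psdOnHyperplane (v z : ι → ℝ) :
    vecMulVec z z ∈ psdOnHyperplane v := by
  refine ⟨transpose_vecMulVec z z, fun x _ => ?_⟩
  rw [dotProduct_vecMulVec_mulVec, dotProduct_comm]
  exact mul_self_nonneg _

theorem neg_vecMulVec_self_mem_psdOnHyperplane (v : ι → ℝ) :
    -vecMulVec v v ∈ psdOnHyperplane v := by
  refine ⟨by simp [IsSymm], fun x hx => ?_⟩
  rw [neg_mulVec, dotProduct_neg, dotProduct_vecMulVec_mulVec, hx, mul_zero, neg_zero]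

variable {v : ι → ℝ} {A : Matrix ι ι ℝ}

theorem neg_posSemidef_of_mem_symmPolar (hA : A ∈ symmPolar (psdOnHyperplane v)) :
    (-A).PosSemidef := by
  refine .of_dotProduct_mulVec_nonneg (isHermitian_iff_isSymm.mpr hA.1.neg) fun x => ?_
  have := hA.2 _ (vecMulVec_self_mem_psdOnHyperplane v x)
  rw [trace_mul_vecMulVec_self] at this
  simpa [neg_mulVec] using this

theorem mulVec_eq_zero_of_mem_symmPolar (hA : A ∈ symmPolar (psdOnHyperplane v)) :
    A *ᵥ v = 0 := by
  have hle := hA.2 _ (vecMulVec_self_mem_psdOnHyperplane v v)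
  have hge := hA.2 _ (neg_vecMulVec_self_mem_psdOnHyperplane v)
  rw [mul_neg, trace_neg, neg_nonpos, trace_mul_vecMulVec_self] at hge
  rw [trace_mul_vecMulVec_self] at hle
  have hzero : star v ⬝ᵥ (-A) *ᵥ v = 0 := by
    simp only [star_trivial, neg_mulVec, dotProduct_neg]
    linarith
  simpa [neg_mulVec] using
    ((neg_posSemidef_of_mem_symmPolar hA).dotProduct_mulVec_zero_iff v).mp hzero

theorem IsSymm.conj {P Y : Matrix ι ι ℝ} (hY : Y.IsSymm) (hP : P.IsSymm) :
    (P * Y * P).IsSymm := by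
  simp only [IsSymm, transpose_mul, hY.eq, hP.eq, mul_assoc]

theorem dotProduct_conj_mulVec {P : Matrix ι ι ℝ} (hP : P.IsSymm) (Y : Matrix ι ι ℝ)
    (x : ι → ℝ) : x ⬝ᵥ (P * Y * P) *ᵥ x = (P *ᵥ x) ⬝ᵥ Y *ᵥ (P *ᵥ x) := by
  rw [← mulVec_mulVec, ← mulVec_mulVec, dotProduct_mulVec, ← mulVec_transpose, hP.eq]

theorem psdOnHyperplane_smul {c : ℝ} (hc : c ≠ 0) (v : ι → ℝ) :
    psdOnHyperplane (c • v) = psdOnHyperplane v := by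
  simp [psdOnHyperplane, smul_dotProduct, hc]

variable [DecidableEq ι]

/-- The orthogonal projection onto `v⊥`; for `v = 0` it is `1`, since `0⁻¹ = 0`. -/
noncomputable def hyperplaneProj (v : ι → ℝ) : Matrix ι ι ℝ :=
  1 - (v ⬝ᵥ v)⁻¹ • vecMulVec v v

theorem isSymm_hyperplaneProj (v : ι → ℝ) : (hyperplaneProj v).IsSymm := by
  simp [hyperplaneProj, IsSymm]

theorem dotProduct_hyperplaneProj_mulVec (v x : ι → ℝ) : v ⬝ᵥ hyperplaneProj v *ᵥ x = 0 := by
  rcases eq_or_ne v 0 with rfl | hv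
  · exact zero_dotProduct _
  have hvv : v ⬝ᵥ v ≠ 0 := by simpa using hv
  simp only [hyperplaneProj, sub_mulVec, one_mulVec, smul_mulVec, vecMulVec_mulVec,
    op_smul_eq_smul, dotProduct_sub, dotProduct_smul, smul_eq_mul]
  field_simp
  ring

theorem mul_hyperplaneProj (hAv : A *ᵥ v = 0) : A * hyperplaneProj v = A := by
  rw [hyperplaneProj, mul_sub, mul_one, mul_smul_comm, mul_vecMulVec, hAv]
  simp

theorem hyperplaneProj_mul (hA : A.IsSymm) (hAv : A *ᵥ v = 0) : hyperplaneProj v * A = A := by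
  have := congrArg transpose (mul_hyperplaneProj hAv)
  rwa [transpose_mul, (isSymm_hyperplaneProj v).eq, hA.eq] at this

theorem conj_hyperplaneProj_posSemidef {Y : Matrix ι ι ℝ} (hY : Y ∈ psdOnHyperplane v) :
    (hyperplaneProj v * Y * hyperplaneProj v).PosSemidef := by
  refine .of_dotProduct_mulVec_nonneg
    (isHermitian_iff_isSymm.mpr (hY.1.conj (isSymm_hyperplaneProj v))) fun x => ?_
  rw [star_trivial, dotProduct_conj_mulVec (isSymm_hyperplaneProj v)]
  exact hY.2 _ (dotProduct_hyperplaneProj_mulVec v x)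

theorem mem_symmPolar_psdOnHyperplane_iff :
    A ∈ symmPolar (psdOnHyperplane v) ↔ (-A).PosSemidef ∧ A *ᵥ v = 0 := by
  refine ⟨fun hA => ⟨neg_posSemidef_of_mem_symmPolar hA, mulVec_eq_zero_of_mem_symmPolar hA⟩,
    fun ⟨hA, hAv⟩ => ?_⟩
  have hAs : A.IsSymm := isSymm_neg_iff.mp (isHermitian_iff_isSymm.mp hA.1)
  refine ⟨hAs, fun Y hY => ?_⟩
  set P := hyperplaneProj v
  calc trace (A * Y) = trace (P * A * P * Y) := by
        rw [hyperplaneProj_mul hAs hAv, mul_hyperplaneProj hAv]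
    _ = -trace (-A * (P * Y * P)) := by
        rw [neg_mul, trace_neg, neg_neg]
        simp only [mul_assoc]
        rw [trace_mul_comm P]
        simp only [mul_assoc]
    _ ≤ 0 := neg_nonpos.mpr (hA.trace_mul_nonneg (conj_hyperplaneProj_posSemidef hY))

theorem mem_symmPolar_psdOnHyperplane_single_iff (j : ι) :
    A ∈ symmPolar (psdOnHyperplane (Pi.single j 1)) ↔
      (-A).PosSemidef ∧ ∀ i, A i j = 0 ∧ A j i = 0 := by
  rw [mem_symmPolar_psdOnHyperplane_iff, mulVec_single_one]
  refine and_congr_right fun hA => ?_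
  have hAs : A.IsSymm := isSymm_neg_iff.mp (isHermitian_iff_isSymm.mp hA.1)
  simp [funext_iff, hAs.apply j]

theorem conj_conj_of_mul_self_eq_one {H : Matrix ι ι ℝ} (hHH : H * H = 1) (M : Matrix ι ι ℝ) :
    H * (H * M * H) * H = M := by
  simp only [← mul_assoc, hHH, one_mul]
  rw [mul_assoc, hHH, mul_one]

theorem conj_mulVec_mulVec_eq_zero_iff {H : Matrix ι ι ℝ} (hHH : H * H = 1) (M : Matrix ι ι ℝ)
    (v : ι → ℝ) : (H * M * H) *ᵥ (H *ᵥ v) = 0 ↔ M *ᵥ v = 0 := by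
  rw [mulVec_mulVec, mul_assoc, hHH, mul_one, ← mulVec_mulVec]
  refine ⟨fun h => ?_, fun h => by rw [h, mulVec_zero]⟩
  simpa [mulVec_mulVec, ← mul_assoc, hHH] using congrArg (H *ᵥ ·) h

theorem posSemidef_conj_iff {H : Matrix ι ι ℝ} (hH : H.IsSymm) (hHH : H * H = 1)
    (M : Matrix ι ι ℝ) : (H * M * H).PosSemidef ↔ M.PosSemidef := by
  have := IsUnit.posSemidef_star_left_conjugate_iff (x := M) ⟨⟨H, H, hHH, hHH⟩, rfl⟩
  rwa [star_eq_conjTranspose, conjTranspose_eq_transpose_of_trivial, hH.eq] at this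

theorem conj_mem_symmPolar_psdOnHyperplane_iff {H : Matrix ι ι ℝ} (hH : H.IsSymm)
    (hHH : H * H = 1) :
    H * A * H ∈ symmPolar (psdOnHyperplane (H *ᵥ v)) ↔ A ∈ symmPolar (psdOnHyperplane v) := by
  rw [mem_symmPolar_psdOnHyperplane_iff, mem_symmPolar_psdOnHyperplane_iff,
    show -(H * A * H) = H * -A * H by rw [mul_neg, neg_mul], posSemidef_conj_iff hH hHH,
    conj_mulVec_mulVec_eq_zero_iff hHH]

noncomputable def householder (u : ι → ℝ) : Matrix ι ι ℝ :=
  1 - (2 / (u ⬝ᵥ u)) • vecMulVec u u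

theorem isSymm_householder (u : ι → ℝ) : (householder u).IsSymm := by
  simp [householder, IsSymm]

theorem householder_mul_self {u : ι → ℝ} (hu : u ⬝ᵥ u ≠ 0) :
    householder u * householder u = 1 := by
  simp only [householder, sub_mul, mul_sub, one_mul, mul_one, smul_mul_smul_comm,
    vecMulVec_mul_vecMulVec, vecMulVec_smul, smul_smul]
  rw [show 2 / (u ⬝ᵥ u) * (2 / (u ⬝ᵥ u)) * (u ⬝ᵥ u) = 2 * (2 / (u ⬝ᵥ u)) by field_simp]
  module

theorem householder_mulVec (u x : ι → ℝ) :
    householder u *ᵥ x = x - (2 * (u ⬝ᵥ x) / (u ⬝ᵥ u)) • u := by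
  simp only [householder, sub_mulVec, one_mulVec, smul_mulVec, vecMulVec_mulVec, op_smul_eq_smul,
    smul_smul]
  ring_nf

end Matrix

section Householder

variable (n : ℕ)

theorem householderH_eq_householder : householderH n = householder (uvec n) := rfl

theorem uvec_eq : uvec n = 1 + Real.sqrt (n + 1) • Pi.single (Fin.last n) 1 := by
  funext i
  by_cases h : i = Fin.last n <;> simp [uvec, h, add_comm]

theorem uvec_dotProduct_one :
    uvec n ⬝ᵥ 1 = Real.sqrt (n + 1) * Real.sqrt (n + 1) + Real.sqrt (n + 1) := by
  simp [uvec_eq, add_dotProduct, Real.mul_self_sqrt (n.cast_add_one_pos (α := ℝ)).le]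

theorem uvec_dotProduct_one_pos : 0 < uvec n ⬝ᵥ 1 := by
  rw [uvec_dotProduct_one]
  positivity

theorem uvec_dotProduct_self : uvec n ⬝ᵥ uvec n = 2 * (uvec n ⬝ᵥ 1) := by
  have hs := Real.mul_self_sqrt (n.cast_add_one_pos (α := ℝ)).le
  rw [uvec_dotProduct_one]
  simp [uvec_eq, add_dotProduct, dotProduct_add]
  linear_combination (-1) * hs

theorem isSymm_householderH : (householderH n).IsSymm :=
  isSymm_householder (uvec n)

theorem householderH_mul_self : householderH n * householderH n = 1 := by
  refine householder_mul_self ?_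
  rw [uvec_dotProduct_self]
  exact (mul_pos two_pos (uvec_dotProduct_one_pos n)).ne'

theorem householderH_mulVec_one :
    householderH n *ᵥ 1 = (-Real.sqrt (n + 1)) • Pi.single (Fin.last n) 1 := by
  have hc : 2 * (uvec n ⬝ᵥ 1) / (uvec n ⬝ᵥ uvec n) = 1 := by
    rw [uvec_dotProduct_self, div_self (mul_pos two_pos (uvec_dotProduct_one_pos n)).ne']
  rw [householderH_eq_householder, householder_mulVec, hc, one_smul, uvec_eq,
    sub_add_cancel_left, neg_smul]

end Householder

/-- The polar cone of the almost positive semidefinite cone `K^n_+` equals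
`{ H · [[Z,0],[0,0]] · H : Z ⪯ 0 }`. -/
theorem polar_almost_psd_cone (n : ℕ) :
    {A : Matrix (Fin (n + 1)) (Fin (n + 1)) ℝ | A.IsSymm ∧
        ∀ Y : Matrix (Fin (n + 1)) (Fin (n + 1)) ℝ,
          (Y.IsSymm ∧ ∀ x : Fin (n + 1) → ℝ,
            (fun _ => (1 : ℝ)) ⬝ᵥ x = 0 → 0 ≤ x ⬝ᵥ Y.mulVec x) →
          Matrix.trace (A * Y) ≤ 0} =
      {A : Matrix (Fin (n + 1)) (Fin (n + 1)) ℝ |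
        ∃ W : Matrix (Fin (n + 1)) (Fin (n + 1)) ℝ,
          (-W).PosSemidef ∧
          (∀ i, W i (Fin.last n) = 0 ∧ W (Fin.last n) i = 0) ∧
          A = householderH n * W * householderH n} := by
  set H := householderH n
  have hH : H.IsSymm := isSymm_householderH n
  have hHH : H * H = 1 := householderH_mul_self n
  have hH1 : psdOnHyperplane (H *ᵥ 1) = psdOnHyperplane (Pi.single (Fin.last n) 1) := by
    rw [householderH_mulVec_one,
      psdOnHyperplane_smul (neg_ne_zero.mpr (Real.sqrt_pos.mpr n.cast_add_one_pos).ne')]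
  ext A
  change A ∈ symmPolar (psdOnHyperplane 1) ↔ _
  constructor
  · intro hA
    obtain ⟨hW, hWlast⟩ := (mem_symmPolar_psdOnHyperplane_single_iff (Fin.last n)).mp <| by
      rwa [← hH1, conj_mem_symmPolar_psdOnHyperplane_iff hH hHH]
    exact ⟨H * A * H, hW, hWlast, (conj_conj_of_mul_self_eq_one hHH A).symm⟩
  · rintro ⟨W, hW, hWlast, rfl⟩
    rw [← conj_mem_symmPolar_psdOnHyperplane_iff hH hHH, hH1,
      conj_conj_of_mul_self_eq_one hHH, mem_symmPolar_psdOnHyperplane_single_iff]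
    exact ⟨hW, hWlast⟩
end
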